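/- Let G be a bipartite graph in which every vertex has degree at least 2 and every cycle of length at least 6 has a chord. If G is disconnected, then G contains two vertex-disjoint 4-cycles lying in distinct connected components. -/

import Mathlib

/-!
Every vertex reaches a cycle: extending a path greedily, its endpoint has a second neighbour, which
either prolongs the path or closes a cycle, and paths cannot grow forever in a finite graph. A chord
of a cycle of length at least 6 splits off a strictly shorter cycle in the same component, so
descending on the length ends at a cycle of length less than 6, which is a 4-cycle because cycles
of a bipartite graph are even. Doing this in two different components gives two 4-cycles, disjoint
because they lie in different components.
-/

open SimpleGraph

/-- A cycle walk has a chord. -/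
def HasChord {V : Type*} (G : SimpleGraph V) {v : V} (c : G.Walk v v) : Prop :=
  ∃ a b, a ∈ c.support ∧ b ∈ c.support ∧ G.Adj a b ∧ ¬ c.toSubgraph.Adj a b

namespace SimpleGraph

variable {V : Type*} {G : SimpleGraph V}

theorem Colorable.even_length_of_loop (hG : G.Colorable 2) {u : V} (p : G.Walk u u) :
    Even p.length := by
  by_contra hodd
  have h3 := p.three_le_chromaticNumber_of_odd_loop (Nat.not_even_iff_odd.mp hodd)
  exact absurd (h3.trans hG.chromaticNumber_le) (by norm_num)

namespace Walk

theorem two_le_length_of_ne_of_notMem_edges {a b : V} (p : G.Walk a b) (hab : a ≠ b)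
    (he : s(a, b) ∉ p.edges) : 2 ≤ p.length := by
  cases p with
  | nil => exact absurd rfl hab
  | cons h q =>
    cases q with
    | nil => simp at he
    | cons => simp

variable [DecidableEq V]

theorem IsCycle.exists_isCycle_length_lt_of_adj_start {a b : V} {c : G.Walk a a} (hc : c.IsCycle)
    (hb : b ∈ c.support) (hab : G.Adj a b) (he : s(a, b) ∉ c.edges) :
    ∃ c' : G.Walk a a, c'.IsCycle ∧ c'.length < c.length := by
  set q := c.takeUntil b hb
  set r := c.dropUntil b hb
  have hqr : q.append r = c := c.take_spec hb
  have hr : r.IsPath := by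
    rw [← hqr] at hc
    exact hc.isPath_of_append_right (not_nil_of_ne hab.ne)
  have hre : s(a, b) ∉ r.edges := fun h => he (c.edges_dropUntil_subset_edges hb h)
  -- `q` is not the chord itself, so closing `r` with the chord loses at least one edge.
  have hq : 2 ≤ q.length := q.two_le_length_of_ne_of_notMem_edges hab.ne
    fun h => he (c.edges_takeUntil_subset_edges hb h)
  have hlen : q.length + r.length = c.length := by rw [← hqr, length_append]
  refine ⟨cons hab r, (cons_isCycle_iff r hab).mpr ⟨hr, hre⟩, ?_⟩
  simp only [length_cons]
  omega

theorem IsCycle.exists_isCycle_length_lt_of_adj {x a b : V} {c : G.Walk x x} (hc : c.IsCycle)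
    (ha : a ∈ c.support) (hb : b ∈ c.support) (hab : G.Adj a b) (he : s(a, b) ∉ c.edges) :
    ∃ c' : G.Walk a a, c'.IsCycle ∧ c'.length < c.length := by
  have hb' : b ∈ (c.rotate a ha).support := (c.mem_support_rotate_iff a ha).mpr hb
  have he' : s(a, b) ∉ (c.rotate a ha).edges :=
    fun h => he ((c.rotate_edges a ha).perm.mem_iff.mp h)
  simpa using (hc.rotate ha).exists_isCycle_length_lt_of_adj_start hb' hab he'

theorem IsPath.exists_isCycle_or_isPath_length_succ {v x : V} [Fintype (G.neighborSet x)]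
    {p : G.Walk v x} (hp : p.IsPath) (hx : 2 ≤ G.degree x) :
    (∃ c : G.Walk x x, c.IsCycle) ∨
      ∃ (y : V) (q : G.Walk v y), q.IsPath ∧ q.length = p.length + 1 := by
  obtain ⟨y, hy, z, hz, hyz⟩ := Finset.one_lt_card.mp
    (show 1 < (G.neighborFinset x).card by rw [card_neighborFinset_eq_degree]; omega)
  rw [mem_neighborFinset] at hy hz
  -- A path meets its endpoint `x` in a single edge, the one to its penultimate vertex.
  obtain ⟨w, hw, hwe⟩ : ∃ w, G.Adj x w ∧ s(x, w) ∉ p.edges := by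
    by_contra! h
    exact hyz ((hp.eq_penultimate_of_mem_edges (h y hy)).trans
      (hp.eq_penultimate_of_mem_edges (h z hz)).symm)
  by_cases hwp : w ∈ p.support
  · have hwe' : s(x, w) ∉ (p.dropUntil w hwp).edges :=
      fun h => hwe (p.edges_dropUntil_subset_edges hwp h)
    exact .inl ⟨_, (cons_isCycle_iff _ hw).mpr ⟨hp.dropUntil hwp, hwe'⟩⟩
  · exact .inr ⟨w, p.concat hw, hp.concat hwp hw, p.length_concat hw⟩

end Walk

theorem exists_isCycle_reachable [Fintype V] [DecidableEq V] [DecidableRel G.Adj]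
    (hdeg : ∀ v : V, 2 ≤ G.degree v) (v : V) :
    ∃ (x : V) (c : G.Walk x x), c.IsCycle ∧ G.Reachable v x := by
  by_contra! hno
  have hpath : ∀ n : ℕ, ∃ (x : V) (p : G.Walk v x), p.IsPath ∧ p.length = n := by
    intro n
    induction n with
    | zero => exact ⟨v, .nil, .nil, rfl⟩
    | succ n ih =>
      obtain ⟨x, p, hp, rfl⟩ := ih
      rcases hp.exists_isCycle_or_isPath_length_succ (hdeg x) with ⟨c, hc⟩ | hlonger
      · exact absurd p.reachable (hno x c hc)
      · exact hlonger
  obtain ⟨x, p, hp, hlen⟩ := hpath (Fintype.card V)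
  exact (hlen ▸ hp.length_lt).false

theorem exists_four_cycle_reachable_of_isCycle [DecidableEq V] (hbip : G.Colorable 2)
    (hchord : ∀ (v : V) (c : G.Walk v v), c.IsCycle → 6 ≤ c.length → HasChord G c)
    {x : V} (c : G.Walk x x) (hc : c.IsCycle) :
    ∃ (y : V) (c' : G.Walk y y), c'.IsCycle ∧ c'.length = 4 ∧ G.Reachable x y := by
  induction hn : c.length using Nat.strong_induction_on generalizing x with
  | _ n ih =>
  by_cases h6 : 6 ≤ n
  · obtain ⟨a, b, ha, hb, hab, hab'⟩ := hchord x c hc (hn ▸ h6)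
    obtain ⟨c', hc', hlt⟩ := hc.exists_isCycle_length_lt_of_adj ha hb hab
      (mt Walk.adj_toSubgraph_iff_mem_edges.mpr hab')
    obtain ⟨y, c₄, hc₄, hlen₄, hay⟩ := ih _ (hn ▸ hlt) c' hc' rfl
    exact ⟨y, c₄, hc₄, hlen₄, (c.takeUntil a ha).reachable.trans hay⟩
  · have h3 := hc.three_le_length
    obtain ⟨k, hk⟩ := hbip.even_length_of_loop c
    exact ⟨x, c, hc, by omega, .refl x⟩

theorem exists_four_cycle_reachable [Fintype V] [DecidableEq V] [DecidableRel G.Adj]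
    (hbip : G.Colorable 2) (hdeg : ∀ v : V, 2 ≤ G.degree v)
    (hchord : ∀ (v : V) (c : G.Walk v v), c.IsCycle → 6 ≤ c.length → HasChord G c) (v : V) :
    ∃ (y : V) (c : G.Walk y y), c.IsCycle ∧ c.length = 4 ∧ G.Reachable v y := by
  obtain ⟨x, c, hc, hvx⟩ := exists_isCycle_reachable hdeg v
  obtain ⟨y, c₄, hc₄, hlen₄, hxy⟩ :=
    exists_four_cycle_reachable_of_isCycle hbip hchord c hc
  exact ⟨y, c₄, hc₄, hlen₄, hvx.trans hxy⟩

end SimpleGraph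

/-- If `G` is a disconnected bipartite graph in which every vertex has degree
at least 2 and every cycle of length at least 6 has a chord, then `G` contains two
vertex-disjoint 4-cycles lying in distinct connected components. -/
theorem disjoint_four_cycles_of_disconnected
    {V : Type*} [Fintype V] [DecidableEq V] (G : SimpleGraph V) [DecidableRel G.Adj]
    (hbip : G.Colorable 2)
    (hdeg : ∀ v : V, 2 ≤ G.degree v)
    (hchord : ∀ (v : V) (c : G.Walk v v), c.IsCycle → 6 ≤ c.length → HasChord G c)
    (hdisc : ¬ G.Preconnected) :
    ∃ (u w : V) (c₁ : G.Walk u u) (c₂ : G.Walk w w),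
      c₁.IsCycle ∧ c₁.length = 4 ∧ c₂.IsCycle ∧ c₂.length = 4 ∧
      ¬ G.Reachable u w ∧ ∀ x ∈ c₁.support, x ∉ c₂.support := by
  obtain ⟨u₀, w₀, hu₀w₀⟩ : ∃ u w, ¬ G.Reachable u w := by
    simpa [Preconnected] using hdisc
  obtain ⟨u, c₁, hc₁, hlen₁, hu⟩ := exists_four_cycle_reachable hbip hdeg hchord u₀
  obtain ⟨w, c₂, hc₂, hlen₂, hw⟩ := exists_four_cycle_reachable hbip hdeg hchord w₀
  have huw : ¬ G.Reachable u w := fun h => hu₀w₀ (hu.trans (h.trans hw.symm))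
  refine ⟨u, w, c₁, c₂, hc₁, hlen₁, hc₂, hlen₂, huw, fun x hx₁ hx₂ => huw ?_⟩
  exact (c₁.takeUntil x hx₁).reachable.trans (c₂.takeUntil x hx₂).reachable.symm
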